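/- Let ε > 0 and μ ∈ ℝ, set ω = √(1 + ε²μ²)/ε², λ⁺ = -(1 + √(1+ε²μ²))/ε², λ⁻ = -(1 - √(1+ε²μ²))/ε², and a(s) = (λ⁺ e^{isλ⁻} - λ⁻ e^{isλ⁺})/(λ⁺ - λ⁻). Then for every s ∈ ℝ, the real part of e^{is/ε²} a(s) equals cos(ωs), and the imaginary part of e^{is/ε²} a(s) equals sin(ωs)/(ε²ω). -/

import Mathlib

open Complex

theorem re_im_exp_mul_a (ε μ ω lamp lamm : ℝ) (hε : 0 < ε)
    (hω : ω = Real.sqrt (1 + ε ^ 2 * μ ^ 2) / ε ^ 2)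
    (hp : lamp = -(1 + Real.sqrt (1 + ε ^ 2 * μ ^ 2)) / ε ^ 2)
    (hm : lamm = -(1 - Real.sqrt (1 + ε ^ 2 * μ ^ 2)) / ε ^ 2)
    (a : ℝ → ℂ)
    (ha : ∀ s : ℝ, a s = ((lamp : ℂ) * Complex.exp (Complex.I * s * lamm)
        - (lamm : ℂ) * Complex.exp (Complex.I * s * lamp)) / ((lamp : ℂ) - lamm)) :
    ∀ s : ℝ,
      (Complex.exp (Complex.I * s / (ε ^ 2 : ℝ)) * a s).re = Real.cos (ω * s) ∧
      (Complex.exp (Complex.I * s / (ε ^ 2 : ℝ)) * a s).im = Real.sin (ω * s) / (ε ^ 2 * ω) := by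
  intro s
  have h1 : (0:ℝ) < 1 + ε ^ 2 * μ ^ 2 := by positivity
  have hr : 0 < Real.sqrt (1 + ε ^ 2 * μ ^ 2) := Real.sqrt_pos.mpr h1
  have hε2 : (ε:ℝ) ^ 2 ≠ 0 := by positivity
  have hε2c : ((ε:ℂ)) ^ 2 ≠ 0 := by
    simpa using (pow_ne_zero 2 (by exact_mod_cast hε.ne' : (ε:ℂ) ≠ 0))
  have hrc : ((Real.sqrt (1 + ε ^ 2 * μ ^ 2) : ℝ) : ℂ) ≠ 0 := by
    exact_mod_cast hr.ne'
  have hω0 : ω ≠ 0 := by rw [hω]; positivity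
  have hpm : (lamp : ℂ) - lamm ≠ 0 := by
    rw [sub_ne_zero]
    intro h
    rw [Complex.ofReal_inj, hp, hm] at h
    field_simp at h
    linarith
  have key : Complex.exp (Complex.I * s / (ε ^ 2 : ℝ)) * a s
      = (Real.cos (ω*s) : ℂ) + Complex.I * ((Real.sin (ω*s) / (ε^2*ω) : ℝ) : ℂ) := by
    rw [ha, mul_div_assoc', div_eq_iff hpm, mul_sub]
    have e1 : Complex.exp (Complex.I * s / (ε ^ 2 : ℝ)) * Complex.exp (Complex.I * s * lamm)
        = (Real.cos (ω*s) : ℂ) + (Real.sin (ω*s) : ℂ) * Complex.I := by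
      rw [← Complex.exp_add]
      have harg : Complex.I * s / (ε ^ 2 : ℝ) + Complex.I * s * lamm
          = ((ω*s : ℝ) : ℂ) * Complex.I := by
        rw [hω, hm]
        push_cast
        field_simp
        ring
      rw [harg, Complex.exp_mul_I]
      push_cast
      ring
    have e2 : Complex.exp (Complex.I * s / (ε ^ 2 : ℝ)) * Complex.exp (Complex.I * s * lamp)
        = (Real.cos (ω*s) : ℂ) - (Real.sin (ω*s) : ℂ) * Complex.I := by
      rw [← Complex.exp_add]
      have harg : Complex.I * s / (ε ^ 2 : ℝ) + Complex.I * s * lamp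
          = ((-(ω*s) : ℝ) : ℂ) * Complex.I := by
        rw [hω, hp]
        push_cast
        field_simp
        ring
      rw [harg, Complex.exp_mul_I]
      push_cast
      rw [Complex.cos_neg, Complex.sin_neg]
      ring
    rw [mul_left_comm (Complex.exp (Complex.I * s / (ε ^ 2 : ℝ))) (lamp:ℂ),
        mul_left_comm (Complex.exp (Complex.I * s / (ε ^ 2 : ℝ))) (lamm:ℂ),
        e1, e2, hω, hp, hm]
    push_cast
    field_simp
    ring_nf
    have hεc : (ε:ℂ) ≠ 0 := by exact_mod_cast hε.ne'
    linear_combination (↑√(1 + ε ^ 2 * μ ^ 2) * (↑ε)⁻¹ ^ 2 * Complex.sin (↑√(1 + ε ^ 2 * μ ^ 2) * ↑s * (↑ε)⁻¹ ^ 2) * Complex.I * 2) * mul_inv_cancel₀ hεc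
  rw [key]
  constructor <;> simp [-Complex.ofReal_cos, -Complex.ofReal_sin] <;> norm_cast
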